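/- arXiv:1411.6622 — 12 statements merged into one kernel-verified Lean document; each statement's English description precedes it below -/
import Mathlib

section
/- Let (Z, B, μ) be a measure space and fix an observed data point y. For two parameter values θ and θ_t, suppose f(z,y|θ) and f(z,y|θ_t) are strictly positive measurable joint densities in z, with observed-data likelihoods g(y|θ) = ∫ f(z,y|θ) dμ(z) and g(y|θ_t) = ∫ f(z,y|θ_t) dμ(z) both positive and finite, and conditional densities f(z|y,θ) = f(z,y|θ)/g(y|θ). Define L(θ) = log g(y|θ), Q(θ|θ_t) = ∫ log f(z,y|θ) · f(z|y,θ_t) dμ(z), and H(θ|θ_t) = ∫ log f(z|y,θ) · f(z|y,θ_t) dμ(z), and assume all of these integrals are finite (the integrands are integrable with respect to μ). Then L(θ) − L(θ_t) ≥ Q(θ|θ_t) − Q(θ_t|θ_t). (Ascent Property of the EM Algorithm.) -/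
open MeasureTheory

/-- **Ascent Property of the EM Algorithm.**
`f z = f(z,y|θ)` and `fT z = f(z,y|θ_t)` are the joint densities in `z` for the fixed
observation `y`; `∫ z, f z ∂μ = g(y|θ)` is the observed-data likelihood;
`fT z / ∫ fT ∂μ` is the conditional density `f(z|y,θ_t)`. The conclusion is
`L(θ) − L(θ_t) ≥ Q(θ|θ_t) − Q(θ_t|θ_t)`. -/
theorem em_ascent_property
    {Z : Type*} [MeasurableSpace Z] (μ : Measure Z)
    (f fT : Z → ℝ)
    (hf_meas : Measurable f) (hfT_meas : Measurable fT)
    (hf_pos : ∀ z, 0 < f z) (hfT_pos : ∀ z, 0 < fT z)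
    (hf_int : Integrable f μ) (hfT_int : Integrable fT μ)
    (hg_pos : 0 < ∫ z, f z ∂μ) (hgT_pos : 0 < ∫ z, fT z ∂μ)
    (hQ_int : Integrable (fun z => Real.log (f z) * (fT z / ∫ w, fT w ∂μ)) μ)
    (hQT_int : Integrable (fun z => Real.log (fT z) * (fT z / ∫ w, fT w ∂μ)) μ)
    (hH_int : Integrable
      (fun z => Real.log (f z / ∫ w, f w ∂μ) * (fT z / ∫ w, fT w ∂μ)) μ)
    (hHT_int : Integrable
      (fun z => Real.log (fT z / ∫ w, fT w ∂μ) * (fT z / ∫ w, fT w ∂μ)) μ) :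
    Real.log (∫ z, f z ∂μ) - Real.log (∫ z, fT z ∂μ) ≥
      (∫ z, Real.log (f z) * (fT z / ∫ w, fT w ∂μ) ∂μ) -
        ∫ z, Real.log (fT z) * (fT z / ∫ w, fT w ∂μ) ∂μ := by
  set g : ℝ := ∫ z, f z ∂μ with hg
  set gT : ℝ := ∫ z, fT z ∂μ with hgT
  have hg0 : g ≠ 0 := ne_of_gt hg_pos
  have hgT0 : gT ≠ 0 := ne_of_gt hgT_pos
  -- the conditional density q z = fT z / gT integrates to 1
  have hq_int : Integrable (fun z => fT z / gT) μ := hfT_int.div_const gT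
  have hq_one : (∫ z, fT z / gT ∂μ) = 1 := by
    rw [integral_div]; exact div_self hgT0
  have ha_int : Integrable (fun z => f z / g) μ := hf_int.div_const g
  have ha_one : (∫ z, f z / g ∂μ) = 1 := by
    rw [integral_div]; exact div_self hg0
  -- rewrite H terms: log (f z / g) = log f z - log g
  have hH_eq : (∫ z, Real.log (f z / g) * (fT z / gT) ∂μ)
      = (∫ z, Real.log (f z) * (fT z / gT) ∂μ) - Real.log g := by
    have : (fun z => Real.log (f z / g) * (fT z / gT))
        = fun z => Real.log (f z) * (fT z / gT) - Real.log g * (fT z / gT) := by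
      funext z
      rw [Real.log_div (ne_of_gt (hf_pos z)) hg0, sub_mul]
    rw [this, integral_sub hQ_int ((hq_int.const_mul _)), integral_const_mul, hq_one,
      mul_one]
  have hHT_eq : (∫ z, Real.log (fT z / gT) * (fT z / gT) ∂μ)
      = (∫ z, Real.log (fT z) * (fT z / gT) ∂μ) - Real.log gT := by
    have : (fun z => Real.log (fT z / gT) * (fT z / gT))
        = fun z => Real.log (fT z) * (fT z / gT) - Real.log gT * (fT z / gT) := by
      funext z
      rw [Real.log_div (ne_of_gt (hfT_pos z)) hgT0, sub_mul]
    rw [this, integral_sub hQT_int ((hq_int.const_mul _)), integral_const_mul, hq_one,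
      mul_one]
  -- Gibbs' inequality: H(θ|θT) ≤ H(θT|θT)
  have hGibbs : (∫ z, Real.log (f z / g) * (fT z / gT) ∂μ)
      ≤ ∫ z, Real.log (fT z / gT) * (fT z / gT) ∂μ := by
    have key : (∫ z, (Real.log (f z / g) * (fT z / gT)
        - Real.log (fT z / gT) * (fT z / gT)) ∂μ) ≤ 0 := by
      have hle : ∀ z, Real.log (f z / g) * (fT z / gT)
          - Real.log (fT z / gT) * (fT z / gT) ≤ f z / g - fT z / gT := by
        intro z
        have hq_pos : 0 < fT z / gT := div_pos (hfT_pos z) hgT_pos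
        have ha_pos : 0 < f z / g := div_pos (hf_pos z) hg_pos
        have hlog : Real.log ((f z / g) / (fT z / gT)) ≤ (f z / g) / (fT z / gT) - 1 :=
          Real.log_le_sub_one_of_pos (div_pos ha_pos hq_pos)
        have := mul_le_mul_of_nonneg_right hlog hq_pos.le
        rw [Real.log_div (ne_of_gt ha_pos) (ne_of_gt hq_pos), sub_mul, sub_mul,
          div_mul_cancel₀ _ (ne_of_gt hq_pos), one_mul] at this
        linarith
      calc (∫ z, (Real.log (f z / g) * (fT z / gT)
            - Real.log (fT z / gT) * (fT z / gT)) ∂μ)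
          ≤ ∫ z, (f z / g - fT z / gT) ∂μ :=
            integral_mono (hH_int.sub hHT_int) (ha_int.sub hq_int) hle
        _ = 0 := by rw [integral_sub ha_int hq_int, ha_one, hq_one, sub_self]
    rw [integral_sub hH_int hHT_int] at key
    linarith
  rw [hH_eq, hHT_eq] at hGibbs
  linarith
end

section
/- Let ρ be a σ-finite measure on a measurable space Ω_Z, and let Lebesgue measure be used on ℝ for the data and noise coordinates. Let φ*(y,z) = f(y,z|θ*) be a nonnegative joint probability density (with respect to Lebesgue × ρ) and φ(y,z) = f(y,z|θ_k) a strictly positive joint density; let κ(n|y) be a nonnegative noise kernel with ∫ κ(n|y) dn = 1 for each y, and suppose φ(y+n,z) > 0 for almost all (y,z,n) with κ(n|y)φ*(y,z) > 0. Define the relative entropies c_k = ∬ log(φ*(y,z)/φ(y,z)) φ*(y,z) dy dρ(z) and E_N[c_k(N)] = ∭ log(φ*(y,z)/φ(y+n,z)) κ(n|y) φ*(y,z) dn dy dρ(z), and assume all logarithmic integrands are integrable with respect to the indicated measures. Then c_k − E_N[c_k(N)] = ∭ log(φ(y+n,z)/φ(y,z)) κ(n|y) φ*(y,z) dn dy dρ(z);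 consequently c_k ≥ E_N[c_k(N)] holds if and only if E_{Y,Z,N|θ*}[ log( f(Y+N,Z|θ_k) / f(Y,Z|θ_k) ) ] ≥ 0. (Noisy Expectation Maximization Theorem, relative-entropy form.) -/
open MeasureTheory

/-- **Noisy Expectation Maximization (NEM) Theorem, relative-entropy form.**
`φstar (y,z) = f(y,z|θ*)`, `φ (y,z) = f(y,z|θ_k)`, and `κ y n = κ(n|y)` is the noise
kernel.  The relative entropy `c_k` is the double integral and `E_N[c_k(N)]` is the
triple integral; the theorem states
`c_k − E_N[c_k(N)] = ∭ log(φ(y+n,z)/φ(y,z)) κ(n|y) φ*(y,z)` and the consequent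
equivalence of `c_k ≥ E_N[c_k(N)]` with the NEM positivity condition. -/
theorem nem_theorem
    {Ωz : Type*} [MeasurableSpace Ωz] (ρ : Measure Ωz) [SigmaFinite ρ]
    (φstar φ : ℝ × Ωz → ℝ) (κ : ℝ → ℝ → ℝ)
    (hφstar_meas : Measurable φstar) (hφ_meas : Measurable φ)
    (hκ_meas : Measurable (Function.uncurry κ))
    (hφstar_nonneg : ∀ p, 0 ≤ φstar p)
    (hφstar_prob : ∫ p, φstar p ∂((volume : Measure ℝ).prod ρ) = 1)
    (hφ_pos : ∀ p, 0 < φ p)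
    (hκ_nonneg : ∀ y n, 0 ≤ κ y n)
    (hκ_prob : ∀ y, (∫ n, κ y n) = 1)
    (hint_ck : Integrable (fun p : ℝ × Ωz => Real.log (φstar p / φ p) * φstar p)
      ((volume : Measure ℝ).prod ρ))
    (hint_ckN : Integrable (fun q : (ℝ × Ωz) × ℝ =>
        Real.log (φstar q.1 / φ (q.1.1 + q.2, q.1.2)) * (κ q.1.1 q.2 * φstar q.1))
      (((volume : Measure ℝ).prod ρ).prod volume))
    (hint_goal : Integrable (fun q : (ℝ × Ωz) × ℝ =>
        Real.log (φ (q.1.1 + q.2, q.1.2) / φ q.1) * (κ q.1.1 q.2 * φstar q.1))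
      (((volume : Measure ℝ).prod ρ).prod volume)) :
    ((∫ p, Real.log (φstar p / φ p) * φstar p ∂((volume : Measure ℝ).prod ρ)) -
        (∫ q, Real.log (φstar q.1 / φ (q.1.1 + q.2, q.1.2)) * (κ q.1.1 q.2 * φstar q.1)
          ∂(((volume : Measure ℝ).prod ρ).prod volume))
      = ∫ q, Real.log (φ (q.1.1 + q.2, q.1.2) / φ q.1) * (κ q.1.1 q.2 * φstar q.1)
          ∂(((volume : Measure ℝ).prod ρ).prod volume)) ∧
    ((∫ q, Real.log (φstar q.1 / φ (q.1.1 + q.2, q.1.2)) * (κ q.1.1 q.2 * φstar q.1)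
          ∂(((volume : Measure ℝ).prod ρ).prod volume) ≤
        ∫ p, Real.log (φstar p / φ p) * φstar p ∂((volume : Measure ℝ).prod ρ)) ↔
      0 ≤ ∫ q, Real.log (φ (q.1.1 + q.2, q.1.2) / φ q.1) * (κ q.1.1 q.2 * φstar q.1)
          ∂(((volume : Measure ℝ).prod ρ).prod volume)) := by
  set μ := ((volume : Measure ℝ).prod ρ) with hμ
  set g : (ℝ × Ωz) × ℝ → ℝ :=
    fun q => Real.log (φstar q.1 / φ q.1) * (κ q.1.1 q.2 * φstar q.1) with hg
  have hpt : ∀ q : (ℝ × Ωz) × ℝ,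
      g q = Real.log (φstar q.1 / φ (q.1.1 + q.2, q.1.2)) * (κ q.1.1 q.2 * φstar q.1)
        + Real.log (φ (q.1.1 + q.2, q.1.2) / φ q.1) * (κ q.1.1 q.2 * φstar q.1) := by
    intro q
    by_cases h : φstar q.1 = 0
    · simp [hg, h]
    · have ha : φstar q.1 ≠ 0 := h
      have hb : φ q.1 ≠ 0 := (hφ_pos q.1).ne'
      have hc : φ (q.1.1 + q.2, q.1.2) ≠ 0 := (hφ_pos _).ne'
      simp only [hg, Real.log_div ha hb, Real.log_div ha hc, Real.log_div hc hb]
      ring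
  have hg_int : Integrable g (μ.prod volume) := by
    have := hint_ckN.add hint_goal
    exact this.congr (Filter.Eventually.of_forall fun q => (hpt q).symm)
  have h1 : ∫ q, g q ∂(μ.prod volume)
      = (∫ q, Real.log (φstar q.1 / φ (q.1.1 + q.2, q.1.2)) * (κ q.1.1 q.2 * φstar q.1)
          ∂(μ.prod volume))
        + ∫ q, Real.log (φ (q.1.1 + q.2, q.1.2) / φ q.1) * (κ q.1.1 q.2 * φstar q.1)
          ∂(μ.prod volume) := by
    rw [integral_congr_ae (Filter.Eventually.of_forall hpt)]
    exact integral_add hint_ckN hint_goal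
  have h2 : ∫ q, g q ∂(μ.prod volume)
      = ∫ p, Real.log (φstar p / φ p) * φstar p ∂μ := by
    rw [MeasureTheory.integral_prod _ hg_int]
    refine integral_congr_ae (Filter.Eventually.of_forall fun p => ?_)
    have : ∀ n : ℝ, g (p, n) = κ p.1 n * (Real.log (φstar p / φ p) * φstar p) := by
      intro n; simp only [hg]; ring
    simp only [this]
    rw [integral_mul_const, hκ_prob p.1, one_mul]
  constructor
  · linarith [h1, h2]
  · constructor <;> intro h <;> linarith [h1, h2]
end

section
/- Fix m ∈ ℝ and d > 0, and let f be the Cauchy probability density f(y) = 1 / ( π d (1 + ((y−m)/d)²) ). Then for all real y and n: f(y+n) ≥ f(y) if and only if n² ≤ 2n(m − y). (NEM Condition for Cauchy Mixture Models.) -/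
open ProbabilityTheory NNReal

/-! Both sides compare the distances of `y + n` and `y` to the location `m`: the Cauchy density
is a decreasing function of `(y - m)²`, and `(y - m)² - (y + n - m)² = 2n(m - y) - n²`. -/

theorem sq_add_sub_le_sq_sub_iff {α : Type*} [CommRing α] [PartialOrder α] [IsOrderedRing α]
    (m y n : α) : (y + n - m) ^ 2 ≤ (y - m) ^ 2 ↔ n ^ 2 ≤ 2 * n * (m - y) := by
  have key : (y - m) ^ 2 - (y + n - m) ^ 2 = 2 * n * (m - y) - n ^ 2 := by ring
  rw [← sub_nonneg, key, sub_nonneg]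

theorem cauchyPDFReal_le_cauchyPDFReal_iff {x₀ : ℝ} {γ : ℝ≥0} (hγ : 0 < γ) (x z : ℝ) :
    cauchyPDFReal x₀ γ x ≤ cauchyPDFReal x₀ γ z ↔ (z - x₀) ^ 2 ≤ (x - x₀) ^ 2 := by
  have hγ' : (0 : ℝ) < γ := hγ
  rw [cauchyPDFReal_def, cauchyPDFReal_def, mul_le_mul_iff_right₀ (by positivity),
    inv_le_inv₀ (by positivity) (by positivity), add_le_add_iff_right]

/-- **NEM Condition for Cauchy Mixture Models.**
For the Cauchy density `f` with location `m` and dispersion `d > 0`,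
additive noise `n` increases the density at `y`, `f(y+n) ≥ f(y)`, exactly when
the quadratic NEM condition `n² ≤ 2n(m − y)` holds. -/
theorem cmm_nem_condition (m d : ℝ) (hd : 0 < d) (f : ℝ → ℝ)
    (hf : ∀ y, f y = 1 / (Real.pi * d * (1 + ((y - m) / d) ^ 2))) :
    ∀ y n : ℝ, f (y + n) ≥ f y ↔ n ^ 2 ≤ 2 * n * (m - y) := by
  intro y n
  let γ : ℝ≥0 := ⟨d, hd.le⟩
  have hf_eq : f = cauchyPDFReal m γ := funext fun x => by
    rw [hf, cauchyPDFReal_def', one_div, mul_inv, mul_inv]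
    rfl
  rw [hf_eq, ge_iff_le, cauchyPDFReal_le_cauchyPDFReal_iff (show 0 < γ from hd),
    sq_add_sub_le_sq_sub_iff]
end

section
/- Let f : ℝ → (0, ∞) be a function such that x ↦ log f(x) is convex. Let X and N be independent real random variables, with N integrable and E[N] = 0, and suppose log f(X+N) and log f(X) are integrable. Then E[ log( f(X+N) / f(X) ) ] ≥ 0; in particular, for every fixed x, E[ log f(x+N) ] ≥ log f(x). (NEM Condition for Log-Convex Densities.) -/
open MeasureTheory

/-- **NEM Condition for Log-Convex Densities.**
If `log ∘ f` is convex, `N` is zero-mean noise independent of `X`, and the indicated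
log terms are integrable, then `E[log(f(X+N)/f(X))] ≥ 0`; in particular, for every
fixed `x` (with the corresponding integrability), `E[log f(x+N)] ≥ log f(x)`. -/
theorem nem_log_convex_condition
    {Ω : Type*} [MeasurableSpace Ω] (P : Measure Ω) [IsProbabilityMeasure P]
    (f : ℝ → ℝ) (hf_pos : ∀ x, 0 < f x)
    (hconv : ConvexOn ℝ Set.univ fun x => Real.log (f x))
    (X N : Ω → ℝ) (hX : Measurable X) (hN : Measurable N)
    (hindep : ProbabilityTheory.IndepFun X N P)
    (hN_int : Integrable N P) (hN_mean : (∫ ω, N ω ∂P) = 0)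
    (hint1 : Integrable (fun ω => Real.log (f (X ω + N ω))) P)
    (hint2 : Integrable (fun ω => Real.log (f (X ω))) P) :
    0 ≤ (∫ ω, Real.log (f (X ω + N ω) / f (X ω)) ∂P) ∧
      ∀ x : ℝ, Integrable (fun ω => Real.log (f (x + N ω))) P →
        Real.log (f x) ≤ ∫ ω, Real.log (f (x + N ω)) ∂P := by
  set g : ℝ → ℝ := fun x => Real.log (f x) with hg
  have hgc : Continuous g :=
    continuousOn_univ.mp (hconv.continuousOn isOpen_univ)
  -- Jensen for a fixed x and measure ν with zero-mean integrable identity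
  have jensen : ∀ (ν : Measure ℝ) [IsProbabilityMeasure ν],
      Integrable (fun n : ℝ => n) ν → (∫ n, n ∂ν) = 0 → ∀ x : ℝ,
      Integrable (fun n => g (x + n)) ν → g x ≤ ∫ n, g (x + n) ∂ν := by
    intro ν _ hid hmean x hint
    have h : g (∫ n, (x + n) ∂ν) ≤ ∫ n, g (x + n) ∂ν :=
      hconv.map_integral_le (μ := ν) (f := fun n => x + n)
        hgc.continuousOn isClosed_univ (Filter.Eventually.of_forall fun _ => trivial)
        ((integrable_const x).add hid) hint
    have hx : (∫ n, (x + n) ∂ν) = x := by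
      rw [integral_add (integrable_const x) hid]
      simp [hmean]
    rwa [hx] at h
  set ν : Measure ℝ := P.map N with hν
  have hνP : IsProbabilityMeasure ν := Measure.isProbabilityMeasure_map hN.aemeasurable
  have hidm : AEStronglyMeasurable (fun n : ℝ => n) ν := aestronglyMeasurable_id
  have hid : Integrable (fun n : ℝ => n) ν :=
    (integrable_map_measure hidm hN.aemeasurable).mpr hN_int
  have hmeanν : (∫ n, n ∂ν) = 0 :=
    (integral_map hN.aemeasurable hidm).trans hN_mean
  have part2 : ∀ x : ℝ, Integrable (fun ω => Real.log (f (x + N ω))) P →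
      Real.log (f x) ≤ ∫ ω, Real.log (f (x + N ω)) ∂P := by
    intro x hint
    have hsm2 : AEStronglyMeasurable (fun n : ℝ => g (x + n)) ν :=
      (hgc.comp (continuous_const.add continuous_id)).aestronglyMeasurable
    have hintν : Integrable (fun n => g (x + n)) ν :=
      (integrable_map_measure hsm2 hN.aemeasurable).mpr hint
    have h := jensen ν hid hmeanν x hintν
    have heq : (∫ n, g (x + n) ∂ν) = ∫ ω, g (x + N ω) ∂P :=
      integral_map hN.aemeasurable hsm2
    exact h.trans_eq heq
  refine ⟨?_, part2⟩
  have hre : (fun ω => Real.log (f (X ω + N ω) / f (X ω)))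
      = fun ω => g (X ω + N ω) - g (X ω) := by
    funext ω
    exact Real.log_div (hf_pos _).ne' (hf_pos _).ne'
  rw [hre, integral_sub hint1 hint2, sub_nonneg]
  set μ : Measure ℝ := P.map X with hμ
  have hμP : IsProbabilityMeasure μ := Measure.isProbabilityMeasure_map hX.aemeasurable
  have hmap : P.map (fun ω => (X ω, N ω)) = μ.prod ν :=
    (ProbabilityTheory.indepFun_iff_map_prod_eq_prod_map_map hX.aemeasurable
      hN.aemeasurable).mp hindep
  have hXN : AEMeasurable (fun ω => (X ω, N ω)) P := (hX.prodMk hN).aemeasurable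
  have hgsm : AEStronglyMeasurable (fun p : ℝ × ℝ => g (p.1 + p.2))
      (P.map (fun ω => (X ω, N ω))) :=
    (hgc.comp continuous_add).aestronglyMeasurable
  have hgsm' : AEStronglyMeasurable (fun p : ℝ × ℝ => g (p.1 + p.2)) (μ.prod ν) := by
    rw [← hmap]; exact hgsm
  have h1 : (∫ ω, g (X ω + N ω) ∂P) = ∫ p : ℝ × ℝ, g (p.1 + p.2) ∂(μ.prod ν) := by
    rw [← hmap]; exact (integral_map hXN hgsm).symm
  have hint1' : Integrable (fun p : ℝ × ℝ => g (p.1 + p.2)) (μ.prod ν) := by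
    rw [← hmap]
    exact (integrable_map_measure hgsm hXN).mpr hint1
  have h2 : (∫ ω, g (X ω) ∂P) = ∫ x, g x ∂μ :=
    (integral_map hX.aemeasurable hgc.aestronglyMeasurable).symm
  rw [h1, h2, integral_prod _ hint1']
  have hae : ∀ᵐ x ∂μ, g x ≤ ∫ n, g (x + n) ∂ν := by
    filter_upwards [hint1'.prod_right_ae] with x hx
    exact jensen ν hid hmeanν x hx
  refine integral_mono_ae ?_ hint1'.integral_prod_left hae
  exact (integrable_map_measure hgc.aestronglyMeasurable hX.aemeasurable).mpr hint2
end

section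
/- Let μ_1, …, μ_J be real numbers and set S = [min_j μ_j, max_j μ_j]. Let (Y_k)_{k≥1} be independent identically distributed real random variables with P(Y_1 ∈ S) > 0. For each k define the random set A_k = { n ∈ ℝ : n² ≤ 2n(μ_j − Y_k) for all j = 1,…,J }. Then with probability one, ⋂_{k≥1} A_k = {0}. (Large Sample GMM- and CMM-NEM Theorem.) -/
/-!
If a sample `y` lies between two locations `μ j₀ ≤ y ≤ μ j₁`, the two NEM inequalities for `j₀`
and `j₁` force `n² ≤ 0` whatever the sign of `n`, so that sample's NEM set is `{0}`. Since the
samples are i.i.d. and hit `[min μ, max μ]` with positive probability, the second Borel–Cantelli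
lemma makes almost every sample path hit it (infinitely often), and one such sample already
collapses the intersection.
-/

open MeasureTheory ProbabilityTheory Filter

lemma eq_zero_of_sq_le_two_mul_sub {n a b y : ℝ} (ha : a ≤ y) (hb : y ≤ b)
    (hna : n ^ 2 ≤ 2 * n * (a - y)) (hnb : n ^ 2 ≤ 2 * n * (b - y)) : n = 0 := by
  rcases lt_trichotomy n 0 with hn | rfl | hn
  · nlinarith
  · rfl
  · nlinarith

lemma setOf_forall_sq_le_two_mul_sub_eq_singleton_zero {ι : Type*} [Finite ι] [Nonempty ι]
    (μ : ι → ℝ) {y : ℝ} (hy : y ∈ Set.Icc (⨅ j, μ j) (⨆ j, μ j)) :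
    {n : ℝ | ∀ j, n ^ 2 ≤ 2 * n * (μ j - y)} = {0} := by
  obtain ⟨j₀, hj₀⟩ := exists_eq_ciInf_of_finite (f := μ)
  obtain ⟨j₁, hj₁⟩ := exists_eq_ciSup_of_finite (f := μ)
  ext n
  refine ⟨fun h ↦ eq_zero_of_sq_le_two_mul_sub (hj₀ ▸ hy.1) (hj₁ ▸ hy.2) (h j₀) (h j₁), ?_⟩
  rintro rfl j
  simp

theorem ae_frequently_mem_of_iIndepFun_identDistrib {Ω β : Type*} [MeasurableSpace Ω]
    [MeasurableSpace β] {P : Measure Ω} [IsProbabilityMeasure P] {Y : ℕ → Ω → β}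
    (hmeas : ∀ k, Measurable (Y k)) (hindep : iIndepFun Y P)
    (hident : ∀ k, IdentDistrib (Y k) (Y 0) P P) {S : Set β} (hS : MeasurableSet S)
    (hpos : P (Y 0 ⁻¹' S) ≠ 0) :
    ∀ᵐ ω ∂P, ∃ᶠ k in atTop, Y k ω ∈ S := by
  have hsm : ∀ k, MeasurableSet (Y k ⁻¹' S) := fun k ↦ hmeas k hS
  have hind : iIndepSet (fun k ↦ Y k ⁻¹' S) P :=
    hindep.iIndep.iIndepSets'.iIndepSet_of_mem (fun k ↦ comap_measurable (Y k) hS) hsm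
  have hsum : ∑' k, P (Y k ⁻¹' S) = ⊤ := by
    simp_rw [fun k ↦ (hident k).measure_mem_eq hS]
    exact ENNReal.tsum_const_eq_top_of_ne_zero hpos
  have hlimsup : limsup (fun k ↦ Y k ⁻¹' S) atTop ∈ ae P :=
    (mem_ae_iff_prob_eq_one (.measurableSet_limsup hsm)).mpr (measure_limsup_eq_one hsm hind hsum)
  filter_upwards [hlimsup] with ω hω
  exact mem_limsup_iff_frequently_mem.mp hω

/-- **Large Sample GMM- and CMM-NEM Theorem.**
For i.i.d. data samples `Y k` that hit the interval `S = [min_j μ_j, max_j μ_j]`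
with positive probability, the common NEM set
`⋂ k { n : n² ≤ 2n(μ_j − Y_k) for all j }` collapses to `{0}` with probability one. -/
theorem large_sample_gmm_cmm_nem
    {Ω : Type*} [MeasurableSpace Ω] (P : Measure Ω) [IsProbabilityMeasure P]
    (J : ℕ) (hJ : 0 < J) (μ : Fin J → ℝ)
    (Y : ℕ → Ω → ℝ) (hmeas : ∀ k, Measurable (Y k))
    (hindep : iIndepFun Y P)
    (hident : ∀ k, IdentDistrib (Y k) (Y 0) P P)
    (hS : 0 < P {ω | Y 0 ω ∈ Set.Icc (⨅ j, μ j) (⨆ j, μ j)}) :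
    ∀ᵐ ω ∂P,
      (⋂ k : ℕ, {n : ℝ | ∀ j, n ^ 2 ≤ 2 * n * (μ j - Y k ω)}) = ({0} : Set ℝ) := by
  have : Nonempty (Fin J) := ⟨⟨0, hJ⟩⟩
  filter_upwards [ae_frequently_mem_of_iIndepFun_identDistrib hmeas hindep hident
    measurableSet_Icc hS.ne'] with ω hω
  obtain ⟨k, hk⟩ := hω.exists
  refine subset_antisymm ?_ ?_
  · exact (Set.iInter_subset _ k).trans (setOf_forall_sq_le_two_mul_sub_eq_singleton_zero μ hk).le
  · rintro n rfl
    simp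
end

section
/- Let Θ be a metric space, L : Θ → ℝ a continuous function, S ⊆ Θ a designated solution set, and M : Θ → Set(Θ) a point-to-set map with M(θ) nonempty for each θ. Let (θ_t)_{t≥0} be a sequence with θ_{t+1} ∈ M(θ_t) for all t. Assume: (1) there is a compact set J ⊆ Θ with θ_t ∈ J for all t; (2) M is closed over the complement of S, i.e. for every θ_∞ ∉ S, whenever a subsequence θ_{t_i} → θ_∞ and points φ_i ∈ M(θ_{t_i}) satisfy φ_i → φ_∞, then φ_∞ ∈ M(θ_∞); (3) if θ ∉ S then L(ψ) > L(θ) for all ψ ∈ M(θ); (4) if θ ∈ S then L(ψ) ≥ L(θ) for all ψ ∈ M(θ). Then every limit point of the sequence (θ_t) (the limit of any convergent subsequence) lies in S. (Zangwill's Convergence Theorem A.) -/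
/-- **Zangwill's Convergence Theorem A.**
An algorithm given by a point-to-set map `M` on a metric space, whose iterates stay
in a compact set, which is closed over the complement of the solution set `S`, and
which strictly increases the continuous objective `L` off `S` (and does not decrease
it on `S`), has all its subsequential limit points in `S`. -/
theorem zangwill_convergence_theorem_A
    {Θ : Type*} [MetricSpace Θ]
    (L : Θ → ℝ) (hL : Continuous L)
    (S : Set Θ) (M : Θ → Set Θ) (hM : ∀ θ, (M θ).Nonempty)
    (θseq : ℕ → Θ) (hstep : ∀ t, θseq (t + 1) ∈ M (θseq t))
    (J : Set Θ) (hJcompact : IsCompact J) (hJ : ∀ t, θseq t ∈ J)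
    (hclosed : ∀ θlim ∉ S, ∀ t : ℕ → ℕ, StrictMono t →
      Filter.Tendsto (fun i => θseq (t i)) Filter.atTop (nhds θlim) →
      ∀ φ : ℕ → Θ, (∀ i, φ i ∈ M (θseq (t i))) →
      ∀ φlim : Θ, Filter.Tendsto φ Filter.atTop (nhds φlim) → φlim ∈ M θlim)
    (h3 : ∀ θ ∉ S, ∀ ψ ∈ M θ, L θ < L ψ)
    (h4 : ∀ θ ∈ S, ∀ ψ ∈ M θ, L θ ≤ L ψ) :
    ∀ θlim : Θ, (∃ t : ℕ → ℕ, StrictMono t ∧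
      Filter.Tendsto (fun i => θseq (t i)) Filter.atTop (nhds θlim)) → θlim ∈ S := by
  intro θlim ⟨t, ht, htend⟩
  by_contra hnot
  -- L along the sequence is monotone
  have mono : Monotone fun n => L (θseq n) := by
    apply monotone_nat_of_le_succ
    intro n
    by_cases hn : θseq n ∈ S
    · exact h4 _ hn _ (hstep n)
    · exact (h3 _ hn _ (hstep n)).le
  -- L along the subsequence tends to L θlim
  have hLsub : Filter.Tendsto (fun i => L (θseq (t i))) Filter.atTop (nhds (L θlim)) :=
    (hL.continuousAt.tendsto).comp htend
  -- whole sequence L (θseq n) tends to L θlim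
  have hLall : Filter.Tendsto (fun n => L (θseq n)) Filter.atTop (nhds (L θlim)) := by
    rcases tendsto_of_monotone mono with h | ⟨l, hl⟩
    · exact absurd (h.comp ht.tendsto_atTop) (not_tendsto_atTop_of_tendsto_nhds hLsub)
    · have : Filter.Tendsto (fun i => L (θseq (t i))) Filter.atTop (nhds l) :=
        hl.comp ht.tendsto_atTop
      rw [tendsto_nhds_unique hLsub this]; exact hl
  -- successors of the subsequence, lying in J
  obtain ⟨φlim, _, s, hs, hstend⟩ :=
    hJcompact.tendsto_subseq (fun i => hJ (t i + 1))
  -- apply closedness along the sub-subsequence t ∘ s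
  have hmem : φlim ∈ M θlim := by
    refine hclosed θlim hnot (fun i => t (s i)) (ht.comp hs)
      (htend.comp hs.tendsto_atTop) (fun i => θseq (t (s i) + 1))
      (fun i => hstep (t (s i))) φlim hstend
  have hlt : L θlim < L φlim := h3 _ hnot _ hmem
  -- but L (θseq (t (s i) + 1)) tends both to L φlim and to L θlim
  have h1 : Filter.Tendsto (fun i => L (θseq (t (s i) + 1))) Filter.atTop (nhds (L φlim)) :=
    (hL.continuousAt.tendsto).comp hstend
  have h2 : Filter.Tendsto (fun i => L (θseq (t (s i) + 1))) Filter.atTop (nhds (L θlim)) := by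
    have : StrictMono fun i => t (s i) + 1 := fun a b hab => Nat.succ_lt_succ (ht (hs hab))
    exact hLall.comp this.tendsto_atTop
  exact absurd (tendsto_nhds_unique h1 h2) (ne_of_gt hlt)
end

section
/- Let K be a positive integer and let N(t; a, I) = (2π)^{−K/2} exp( −(1/2) ‖t − a‖² ) denote the K-dimensional Gaussian density with mean a and identity covariance, where ‖·‖ is the Euclidean norm on ℝ^K. Then for all t, n, a ∈ ℝ^K: log( N(t+n; a, I) / N(t; a, I) ) = (1/2) ( ‖t − a‖² − ‖t + n − a‖² ); hence N(t+n; a, I) ≥ N(t; a, I) if and only if ‖n − (a − t)‖² − ‖a − t‖² ≤ 0, i.e. the noise n lies in the closed ball of radius ‖a − t‖ centered at a − t. (Forbidden Sphere Noise-Benefit Condition for backpropagation with Gaussian output neurons.) -/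
open Real

theorem log_mul_exp_div_mul_exp {c : ℝ} (hc : c ≠ 0) (x y : ℝ) :
    log (c * exp x / (c * exp y)) = x - y := by
  rw [mul_div_mul_left _ _ hc, ← exp_sub, log_exp]

theorem mul_exp_le_mul_exp_iff {c : ℝ} (hc : 0 < c) {x y : ℝ} :
    c * exp x ≤ c * exp y ↔ x ≤ y := by
  rw [mul_le_mul_iff_right₀ hc, exp_le_exp]

theorem norm_add_sub_eq_norm_sub_sub {E : Type*} [SeminormedAddCommGroup E] (t n a : E) :
    ‖t + n - a‖ = ‖n - (a - t)‖ := by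
  congr 1
  abel

/-- **Forbidden Sphere Noise-Benefit Condition** (backpropagation with Gaussian
output neurons).  For the `K`-dimensional standard Gaussian density
`Nd t a = (2π)^{−K/2} exp(−‖t−a‖²/2)`:
`log(Nd (t+n) a / Nd t a) = (‖t−a‖² − ‖t+n−a‖²)/2`, and `Nd (t+n) a ≥ Nd t a`
exactly when the noise `n` lies in the closed ball of radius `‖a−t‖` about `a−t`. -/
theorem forbidden_sphere_bp
    (K : ℕ)
    (Nd : EuclideanSpace ℝ (Fin K) → EuclideanSpace ℝ (Fin K) → ℝ)
    (hNd : ∀ t a, Nd t a =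
      (2 * Real.pi) ^ (-(K : ℝ) / 2) * Real.exp (-(1 / 2) * ‖t - a‖ ^ 2)) :
    ∀ t n a : EuclideanSpace ℝ (Fin K),
      (Real.log (Nd (t + n) a / Nd t a) =
        (1 / 2) * (‖t - a‖ ^ 2 - ‖t + n - a‖ ^ 2)) ∧
      (Nd (t + n) a ≥ Nd t a ↔ ‖n - (a - t)‖ ^ 2 - ‖a - t‖ ^ 2 ≤ 0) := by
  intro t n a
  have hc : (0 : ℝ) < (2 * π) ^ (-(K : ℝ) / 2) := by positivity
  refine ⟨?_, ?_⟩
  · rw [hNd, hNd, log_mul_exp_div_mul_exp hc.ne']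
    ring
  · rw [hNd, hNd, ge_iff_le, mul_exp_le_mul_exp_iff hc, norm_add_sub_eq_norm_sub_sub,
      norm_sub_rev t a]
    constructor <;> intro h <;> linarith
end

section
/- Let I, J be positive integers, W an I×J real matrix, b ∈ ℝ^I, a ∈ ℝ^J, and define the Bernoulli–Bernoulli restricted Boltzmann machine energy E(x, h) = − Σ_{i=1}^I Σ_{j=1}^J w_{ij} x_i h_j − Σ_{i=1}^I b_i x_i − Σ_{j=1}^J a_j h_j for x ∈ ℝ^I, h ∈ ℝ^J. Then for every noise vector n ∈ ℝ^I: −E(x+n, h) + E(x, h) = nᵀ (W h + b). Consequently the NEM positivity condition E[ −E(x+N, h) + E(x, h) ] ≥ 0 holds if and only if E[ Nᵀ (W h + b) ] ≥ 0. (Forbidden Hyperplane Noise-Benefit Condition for Bernoulli–Bernoulli RBM training.) -/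
open MeasureTheory Matrix

/-- **Forbidden Hyperplane Noise-Benefit Condition for Bernoulli–Bernoulli RBM
training.**  For the Bernoulli–Bernoulli RBM energy `E`, the energy difference under
visible-layer noise `n` is `−E(x+n,h) + E(x,h) = nᵀ(Wh + b)`; consequently the NEM
positivity condition `E[−E(x+N,h)+E(x,h)] ≥ 0` holds iff `E[Nᵀ(Wh+b)] ≥ 0`. -/
theorem rbm_bernoulli_bernoulli_nem
    (I J : ℕ) (hI : 0 < I) (hJ : 0 < J)
    (W : Matrix (Fin I) (Fin J) ℝ) (b : Fin I → ℝ) (a : Fin J → ℝ)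
    (E : (Fin I → ℝ) → (Fin J → ℝ) → ℝ)
    (hE : ∀ x h, E x h =
      -(∑ i, ∑ j, W i j * x i * h j) - (∑ i, b i * x i) - ∑ j, a j * h j)
    {Ω : Type*} [MeasurableSpace Ω] (P : Measure Ω) [IsProbabilityMeasure P]
    (X : Ω → Fin I → ℝ) (Hv : Ω → Fin J → ℝ) (Nv : Ω → Fin I → ℝ) :
    (∀ (x n : Fin I → ℝ) (h : Fin J → ℝ),
      -E (x + n) h + E x h = n ⬝ᵥ (W *ᵥ h + b)) ∧
    ((0 ≤ ∫ ω, (-E (X ω + Nv ω) (Hv ω) + E (X ω) (Hv ω)) ∂P) ↔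
      0 ≤ ∫ ω, Nv ω ⬝ᵥ (W *ᵥ Hv ω + b) ∂P) := by
  have key : ∀ (x n : Fin I → ℝ) (h : Fin J → ℝ),
      -E (x + n) h + E x h = n ⬝ᵥ (W *ᵥ h + b) := by
    intro x n h
    simp only [hE, Pi.add_apply, dotProduct, mulVec, mul_add, add_mul,
      Finset.sum_add_distrib, Finset.mul_sum]
    ring_nf
    have h1 : (∑ i : Fin I, ∑ j : Fin J, W i j * n i * h j)
        = ∑ i : Fin I, ∑ j : Fin J, n i * W i j * h j :=
      Finset.sum_congr rfl fun i _ => Finset.sum_congr rfl fun j _ => by ring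
    have h2 : (∑ i : Fin I, b i * n i) = ∑ i : Fin I, n i * b i :=
      Finset.sum_congr rfl fun i _ => by ring
    rw [h1, h2, add_comm]
  refine ⟨key, ?_⟩
  have : (fun ω => -E (X ω + Nv ω) (Hv ω) + E (X ω) (Hv ω)) =
      (fun ω => Nv ω ⬝ᵥ (W *ᵥ Hv ω + b)) := by
    funext ω; exact key _ _ _
  rw [this]
end

section
/- Let I, J be positive integers, W an I×J real matrix, b ∈ ℝ^I, a ∈ ℝ^J, and define the Gaussian–Bernoulli restricted Boltzmann machine energy E(x, h) = − Σ_{i=1}^I Σ_{j=1}^J w_{ij} x_i h_j + (1/2) Σ_{i=1}^I (x_i − b_i)² − Σ_{j=1}^J a_j h_j for x ∈ ℝ^I, h ∈ ℝ^J. Then for every noise vector n ∈ ℝ^I: −E(x+n, h) + E(x, h) = nᵀ (W h + b − x) − (1/2) ‖n‖², where ‖·‖ is the Euclidean norm. Consequently the NEM positivity condition E[ −E(x+N, h) + E(x, h) ] ≥ 0 holds if and only if E[ (1/2)‖N‖² − Nᵀ (W h + b − x) ] ≤ 0. (Forbidden Sphere Noise-Benefit Condition for Gaussian–Bernoulli RBM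 training.) -/
open MeasureTheory Matrix

/-- **Forbidden Sphere Noise-Benefit Condition for Gaussian–Bernoulli RBM
training.**  For the Gaussian–Bernoulli RBM energy `E`, the energy difference under
visible-layer noise `n` is `−E(x+n,h) + E(x,h) = nᵀ(Wh + b − x) − ‖n‖²/2`;
consequently the NEM positivity condition `E[−E(x+N,h)+E(x,h)] ≥ 0` holds iff
`E[‖N‖²/2 − Nᵀ(Wh + b − x)] ≤ 0`. -/
theorem rbm_gaussian_bernoulli_nem
    (I J : ℕ) (hI : 0 < I) (hJ : 0 < J)
    (W : Matrix (Fin I) (Fin J) ℝ) (b : Fin I → ℝ) (a : Fin J → ℝ)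
    (E : (Fin I → ℝ) → (Fin J → ℝ) → ℝ)
    (hE : ∀ x h, E x h =
      -(∑ i, ∑ j, W i j * x i * h j) + (1 / 2) * (∑ i, (x i - b i) ^ 2)
        - ∑ j, a j * h j)
    {Ω : Type*} [MeasurableSpace Ω] (P : Measure Ω) [IsProbabilityMeasure P]
    (X : Ω → Fin I → ℝ) (Hv : Ω → Fin J → ℝ) (Nv : Ω → Fin I → ℝ) :
    (∀ (x n : Fin I → ℝ) (h : Fin J → ℝ),
      -E (x + n) h + E x h = n ⬝ᵥ (W *ᵥ h + b - x) - (1 / 2) * ∑ i, (n i) ^ 2) ∧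
    ((0 ≤ ∫ ω, (-E (X ω + Nv ω) (Hv ω) + E (X ω) (Hv ω)) ∂P) ↔
      (∫ ω, ((1 / 2) * (∑ i, (Nv ω i) ^ 2) -
        Nv ω ⬝ᵥ (W *ᵥ Hv ω + b - X ω)) ∂P) ≤ 0) := by
  have key : ∀ (x n : Fin I → ℝ) (h : Fin J → ℝ),
      -E (x + n) h + E x h = n ⬝ᵥ (W *ᵥ h + b - x) - (1 / 2) * ∑ i, (n i) ^ 2 := by
    intro x n h
    simp only [hE, dotProduct, mulVec, Pi.add_apply, Pi.sub_apply, dotProduct,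
      Finset.mul_sum, ← Finset.sum_sub_distrib, ← Finset.sum_add_distrib,
      ← Finset.sum_neg_distrib, neg_add, neg_sub, neg_neg]
    rw [sub_add_sub_cancel', ← Finset.sum_sub_distrib]
    refine Finset.sum_congr rfl fun i _ => ?_
    rw [add_sub_add_comm, ← Finset.sum_sub_distrib]
    rw [show (∑ j, (-(W i j * x i * h j) - -(W i j * (x i + n i) * h j))) =
      ∑ j, n i * (W i j * h j) from Finset.sum_congr rfl fun j _ => by ring,
      ← Finset.mul_sum]
    ring
  refine ⟨key, ?_⟩
  have heq : (∫ ω, ((1 / 2) * (∑ i, (Nv ω i) ^ 2) -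
      Nv ω ⬝ᵥ (W *ᵥ Hv ω + b - X ω)) ∂P) =
      -∫ ω, (-E (X ω + Nv ω) (Hv ω) + E (X ω) (Hv ω)) ∂P := by
    rw [← integral_neg]
    refine integral_congr_ae (Filter.Eventually.of_forall fun ω => ?_)
    simp only [key (X ω) (Nv ω) (Hv ω)]
    ring
  rw [heq, neg_nonpos]
end

section
/- Let 𝒟 ⊂ ℝ^d and 𝒳 ⊂ ℝ^e be compact sets, where 𝒟 has finite Lebesgue measure m(𝒟). Let h : 𝒟 → ℝ be a bounded continuous prior probability density (h ≥ 0 and ∫_𝒟 h = 1), and let g : 𝒳 × 𝒟 → ℝ be a bounded continuous nonnegative likelihood; write g(x|θ). Assume the Bayes factor q(x) = ∫_𝒟 h(u) g(x|u) du is strictly positive for every x ∈ 𝒳, and define the posterior f(θ|x) = g(x|θ) h(θ) / q(x). Then for every ε > 0 there exist δ_h > 0 and δ_g > 0 such that: for all measurable functions H : 𝒟 → ℝ and G : 𝒳 × 𝒟 → ℝ with sup_θ |H(θ) − h(θ)| < δ_h and sup_{x,θ} |G(x|θ) − g(x|θ)| < δ_g, the approximate Bayes factor Q(x) = ∫_𝒟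 H(u) G(x|u) du is nonzero for all x ∈ 𝒳 and the approximate posterior F(θ|x) = H(θ) G(x|θ) / Q(x) satisfies |F(θ|x) − f(θ|x)| < ε for all x ∈ 𝒳 and all θ ∈ 𝒟. (Bayesian Approximation Theorem.) -/
/-!
The Bayes factor `q x = ∫_D h g(x|·)` depends continuously on `x`, so on the compact set `X` it
is bounded below by some `m > 0`. Multiplication and division are continuous near the compact
sets of values `(h θ, g(x|θ))` and `(h θ g(x|θ), q x)`, hence uniformly continuous there: a
uniformly small error in `H` and `G` gives a uniformly small error in the integrand `H G`,
hence (as `D` has finite measure) in the Bayes factor `Q`, and finally in `H G / Q`.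
-/

open MeasureTheory

theorem IsCompact.exists_forall_dist_lt_of_continuousAt {α β : Type*} [PseudoMetricSpace α]
    [PseudoMetricSpace β] {s : Set α} {f : α → β} (hs : IsCompact s)
    (hf : ∀ a ∈ s, ContinuousAt f a) {ε : ℝ} (hε : 0 < ε) :
    ∃ δ > 0, ∀ a ∈ s, ∀ b, dist a b < δ → dist (f a) (f b) < ε := by
  obtain ⟨δ, hδ, hball⟩ := Metric.mem_uniformity_dist.1 <|
    hs.uniformContinuousAt_of_continuousAt f hf (Metric.dist_mem_uniformity hε)
  exact ⟨δ, hδ, fun a ha b hab => hball hab ha⟩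

theorem exists_forall_abs_apply_sub_apply_lt {γ : Type*} [TopologicalSpace γ] {S : Set γ}
    (hS : IsCompact S) {u v : γ → ℝ} (hu : ContinuousOn u S) (hv : ContinuousOn v S)
    {φ : ℝ → ℝ → ℝ} (hφ : ∀ z ∈ S, ContinuousAt (Function.uncurry φ) (u z, v z))
    {ε : ℝ} (hε : 0 < ε) :
    ∃ δ > 0, ∀ z ∈ S, ∀ a b : ℝ, |a - u z| < δ → |b - v z| < δ →
      |φ a b - φ (u z) (v z)| < ε := by
  obtain ⟨δ, hδ, hdist⟩ := (hS.image_of_continuousOn (hu.prodMk hv))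
    |>.exists_forall_dist_lt_of_continuousAt (f := Function.uncurry φ)
      (by rintro _ ⟨z, hz, rfl⟩; exact hφ z hz) hε
  refine ⟨δ, hδ, fun z hz a b ha hb => ?_⟩
  have hab : dist (u z, v z) (a, b) < δ := by
    rw [dist_comm, Prod.dist_eq, Real.dist_eq, Real.dist_eq]
    exact max_lt ha hb
  rw [← Real.dist_eq, dist_comm]
  exact hdist _ ⟨z, hz, rfl⟩ _ hab

theorem continuousOn_setIntegral_of_continuousOn_prod {α β E : Type*} [TopologicalSpace α]
    [FirstCountableTopology α] [TopologicalSpace β] [MeasurableSpace β] [OpensMeasurableSpace β]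
    {μ : Measure β} [IsFiniteMeasureOnCompacts μ] [NormedAddCommGroup E] [NormedSpace ℝ E]
    {f : α → β → E} {X : Set α} {D : Set β} (hf : ContinuousOn (Function.uncurry f) (X ×ˢ D))
    (hX : IsCompact X) (hD : IsCompact D) (hDm : MeasurableSet D) :
    ContinuousOn (fun x => ∫ u in D, f x u ∂μ) X := by
  obtain ⟨C, hC⟩ := (hX.prod hD).exists_bound_of_continuousOn hf
  apply continuousOn_of_dominated (bound := fun _ => C)
  · intro x hx
    exact (hf.comp (Continuous.prodMk_right x).continuousOn fun u hu => ⟨hx, hu⟩)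
      |>.aestronglyMeasurable_of_isCompact hD hDm
  · intro x hx
    exact ae_restrict_of_forall_mem hDm fun u hu => hC (x, u) ⟨hx, hu⟩
  · exact integrableOn_const hD.measure_ne_top
  · exact ae_restrict_of_forall_mem hDm fun u hu =>
      hf.comp (Continuous.prodMk_left u).continuousOn fun x hx => ⟨hx, hu⟩

theorem norm_setIntegral_sub_setIntegral_le {α E : Type*} [MeasurableSpace α]
    [NormedAddCommGroup E] [NormedSpace ℝ E] {μ : Measure α} {s : Set α} {f F : α → E} {η : ℝ}
    (hs : MeasurableSet s) (hμs : μ s < ⊤) (hf : IntegrableOn f s μ)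
    (hF : AEStronglyMeasurable F (μ.restrict s)) (hFf : ∀ x ∈ s, ‖F x - f x‖ ≤ η) :
    ‖∫ x in s, F x ∂μ - ∫ x in s, f x ∂μ‖ ≤ η * μ.real s := by
  have hFf_int : IntegrableOn (F - f) s μ :=
    .of_bound hμs (hF.sub hf.aestronglyMeasurable) η (ae_restrict_of_forall_mem hs hFf)
  have hF_int : IntegrableOn F s μ := by simpa using hFf_int.add hf
  rw [← integral_sub hF_int hf]
  exact norm_setIntegral_le_of_norm_le_const hμs hFf

theorem exists_pos_le_and_mul_lt {r V : ℝ} (hr : 0 < r) (hV : 0 ≤ V) :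
    ∃ τ > 0, τ ≤ r ∧ τ * V < r := by
  refine ⟨r / (V + 1), by positivity, div_le_self hr.le (by linarith), ?_⟩
  rw [div_mul_eq_mul_div, div_lt_iff₀ (by positivity)]
  linarith

theorem bayesian_approximation_theorem_general
    (d e : ℕ)
    (D : Set (Fin d → ℝ)) (X : Set (Fin e → ℝ))
    (hDc : IsCompact D) (hXc : IsCompact X) (hDm : MeasurableSet D)
    (h : (Fin d → ℝ) → ℝ) (g : (Fin e → ℝ) → (Fin d → ℝ) → ℝ)
    (hh_cont : ContinuousOn h D)
    (hg_cont : ContinuousOn (fun q : (Fin e → ℝ) × (Fin d → ℝ) => g q.1 q.2) (X ×ˢ D))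
    (hq_pos : ∀ x ∈ X, 0 < ∫ u in D, h u * g x u) :
    ∀ ε > 0, ∃ δh > 0, ∃ δg > 0,
      ∀ (H : (Fin d → ℝ) → ℝ) (G : (Fin e → ℝ) → (Fin d → ℝ) → ℝ),
        Measurable H →
        Measurable (fun q : (Fin e → ℝ) × (Fin d → ℝ) => G q.1 q.2) →
        (∀ θ ∈ D, |H θ - h θ| < δh) →
        (∀ x ∈ X, ∀ θ ∈ D, |G x θ - g x θ| < δg) →
        (∀ x ∈ X, (∫ u in D, H u * G x u) ≠ 0) ∧
        (∀ x ∈ X, ∀ θ ∈ D,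
          |H θ * G x θ / (∫ u in D, H u * G x u) -
            h θ * g x θ / (∫ u in D, h u * g x u)| < ε) := by
  intro ε hε
  have hh_snd : ContinuousOn (fun z : (Fin e → ℝ) × (Fin d → ℝ) => h z.2) (X ×ˢ D) :=
    hh_cont.comp continuousOn_snd fun z hz => hz.2
  have hq_cont : ContinuousOn (fun x => ∫ u in D, h u * g x u) X :=
    continuousOn_setIntegral_of_continuousOn_prod (hh_snd.mul hg_cont) hXc hDc hDm
  obtain ⟨m, hm, hqm⟩ := hXc.exists_forall_le' hq_cont hq_pos
  obtain ⟨η, hη, hdiv⟩ := exists_forall_abs_apply_sub_apply_lt (hXc.prod hDc)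
    (hh_snd.mul hg_cont) (hq_cont.comp continuousOn_fst fun z hz => hz.1) (φ := (· / ·))
    (fun z hz => continuousAt_fst.div continuousAt_snd (hq_pos _ hz.1).ne') hε
  obtain ⟨τ, hτ, hτη, hτD⟩ : ∃ τ > 0, τ ≤ min η m ∧ τ * volume.real D < min η m :=
    exists_pos_le_and_mul_lt (lt_min hη hm) measureReal_nonneg
  obtain ⟨δ, hδ, hmul⟩ := exists_forall_abs_apply_sub_apply_lt (hXc.prod hDc) hh_snd hg_cont
    (φ := (· * ·)) (fun _ _ => continuous_mul.continuousAt) hτ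
  refine ⟨δ, hδ, δ, hδ, fun H G hH hG hHh hGg => ?_⟩
  have hprod (x) (hx : x ∈ X) (θ) (hθ : θ ∈ D) : |H θ * G x θ - h θ * g x θ| < τ :=
    hmul (x, θ) ⟨hx, hθ⟩ _ _ (hHh θ hθ) (hGg x hx θ hθ)
  have hQ (x) (hx : x ∈ X) : |(∫ u in D, H u * G x u) - ∫ u in D, h u * g x u| < min η m :=
    (norm_setIntegral_sub_setIntegral_le hDm hDc.measure_lt_top
      ((hh_cont.mul (hg_cont.comp (Continuous.prodMk_right x).continuousOn
        fun u hu => ⟨hx, hu⟩)).integrableOn_compact hDc)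
      (hH.mul (hG.comp measurable_prodMk_left)).aestronglyMeasurable
      fun θ hθ => (hprod x hx θ hθ).le).trans_lt hτD
  refine ⟨fun x hx hQ0 => ?_, fun x hx θ hθ => hdiv (x, θ) ⟨hx, hθ⟩ _ _
    ((hprod x hx θ hθ).trans_le (hτη.trans (min_le_left _ _)))
    ((hQ x hx).trans_le (min_le_left _ _))⟩
  have := (abs_lt.1 (hQ x hx)).1
  linarith [hqm x hx, min_le_right η m]

/-- **Bayesian Approximation Theorem.**
On compact sets `D` (parameters) and `X` (data), uniform (sup-norm) approximators
`H` of the bounded continuous prior `h` and `G` of the bounded continuous likelihood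
`g` yield, via Bayes theorem, a uniform approximator
`F(θ|x) = H(θ)G(x|θ)/∫_D H G` of the posterior `f(θ|x) = h(θ)g(x|θ)/∫_D h g`. -/
theorem bayesian_approximation_theorem
    (d e : ℕ)
    (D : Set (Fin d → ℝ)) (X : Set (Fin e → ℝ))
    (hDc : IsCompact D) (hXc : IsCompact X) (hDm : MeasurableSet D)
    (h : (Fin d → ℝ) → ℝ) (g : (Fin e → ℝ) → (Fin d → ℝ) → ℝ)
    (hh_cont : ContinuousOn h D)
    (hh_bdd : ∃ C, ∀ θ ∈ D, |h θ| ≤ C)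
    (hh_nonneg : ∀ θ ∈ D, 0 ≤ h θ)
    (hh_prob : (∫ θ in D, h θ) = 1)
    (hg_cont : ContinuousOn (fun q : (Fin e → ℝ) × (Fin d → ℝ) => g q.1 q.2) (X ×ˢ D))
    (hg_bdd : ∃ C, ∀ x ∈ X, ∀ θ ∈ D, |g x θ| ≤ C)
    (hg_nonneg : ∀ x ∈ X, ∀ θ ∈ D, 0 ≤ g x θ)
    (hq_pos : ∀ x ∈ X, 0 < ∫ u in D, h u * g x u) :
    ∀ ε > 0, ∃ δh > 0, ∃ δg > 0,
      ∀ (H : (Fin d → ℝ) → ℝ) (G : (Fin e → ℝ) → (Fin d → ℝ) → ℝ),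
        Measurable H →
        Measurable (fun q : (Fin e → ℝ) × (Fin d → ℝ) => G q.1 q.2) →
        (∀ θ ∈ D, |H θ - h θ| < δh) →
        (∀ x ∈ X, ∀ θ ∈ D, |G x θ - g x θ| < δg) →
        (∀ x ∈ X, (∫ u in D, H u * G x u) ≠ 0) ∧
        (∀ x ∈ X, ∀ θ ∈ D,
          |H θ * G x θ / (∫ u in D, H u * G x u) -
            h θ * g x θ / (∫ u in D, h u * g x u)| < ε) :=
  bayesian_approximation_theorem_general d e D X hDc hXc hDm h g hh_cont hg_cont hq_pos
end

section
/- Let D ⊂ ℝ have finite positive Lebesgue measure m(D), and let X be a set of data values. Suppose H : D → ℝ and G : X × D → ℝ satisfy the centroid bounds 0 < c_{h,min} ≤ H(θ) ≤ c_{h,max} for all θ ∈ D and 0 < c_{g,min} ≤ G(x|θ) ≤ c_{g,max} for all x ∈ X, θ ∈ D, where c_{h,min}, c_{h,max}, c_{g,min}, c_{g,max} are positive constants. Define c_{gh,min} = c_{g,min} c_{h,min}, c_{gh,max} = c_{g,max} c_{h,max}, and the normalized posterior F(θ|x) = H(θ) G(x|θ) / ∫_D H(u) G(x|u) du. Then for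 all x ∈ X and θ ∈ D: c_{gh,min} / ( m(D) · c_{gh,max} ) ≤ F(θ|x) ≤ c_{gh,max} / ( m(D) · c_{gh,min} ). (Centroid-based bounds for the doubly fuzzy posterior.) -/
open MeasureTheory Set
open scoped ENNReal

/-! The posterior numerator `H θ G(x|θ)` lies between `c_{gh,min}` and `c_{gh,max}`, so its
integral over `D` lies between `m(D) c_{gh,min}` and `m(D) c_{gh,max}`; dividing the smallest
numerator by the largest denominator and vice versa gives the two bounds. -/

lemma mul_mem_Icc_of_mem_Icc {K : Type*} [MulZeroClass K] [Preorder K] [PosMulMono K]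
    [MulPosMono K]
    {a b c d x y : K} (ha : 0 ≤ a) (hc : 0 ≤ c) (hx : x ∈ Icc a b) (hy : y ∈ Icc c d) :
    x * y ∈ Icc (a * c) (b * d) :=
  ⟨mul_le_mul hx.1 hy.1 hc (ha.trans hx.1),
    mul_le_mul hx.2 hy.2 (hc.trans hy.1) (ha.trans (hx.1.trans hx.2))⟩

lemma div_mem_Icc_of_mem_Icc {K : Type*} [Field K] [LinearOrder K] [IsStrictOrderedRing K]
    {a b m p I : K} (ha : 0 < a) (hm : 0 < m) (hp : p ∈ Icc a b)
    (hI : I ∈ Icc (m * a) (m * b)) :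
    p / I ∈ Icc (a / (m * b)) (b / (m * a)) := by
  have hb : 0 < b := ha.trans_le (hp.1.trans hp.2)
  have hI_pos : 0 < I := (mul_pos hm ha).trans_le hI.1
  exact ⟨div_le_div₀ (ha.le.trans hp.1) hp.1 hI_pos hI.2,
    div_le_div₀ hb.le hp.2 (mul_pos hm ha) hI.1⟩

section SetIntegral

variable {α : Type*} [MeasurableSpace α] {μ : Measure α} {s : Set α} {f : α → ℝ}
  {a b : ℝ}

lemma integrableOn_of_mem_Icc (hs : MeasurableSet s) (hμs : μ s ≠ ∞)
    (hf : AEStronglyMeasurable f (μ.restrict s)) (hbdd : ∀ x ∈ s, f x ∈ Icc a b) :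
    IntegrableOn f s μ :=
  .of_bound hμs.lt_top hf (max |a| |b|) <| by
    filter_upwards [ae_restrict_mem hs] with x hx
    exact abs_le_max_abs_abs (hbdd x hx).1 (hbdd x hx).2

lemma setIntegral_mem_Icc_of_mem_Icc (hs : MeasurableSet s) (hμs : μ s ≠ ∞)
    (hf : IntegrableOn f s μ) (hbdd : ∀ x ∈ s, f x ∈ Icc a b) :
    ∫ x in s, f x ∂μ ∈ Icc (μ.real s * a) (μ.real s * b) := by
  refine ⟨mul_comm a (μ.real s) ▸
    setIntegral_ge_of_const_le_real hs hμs (fun x hx => (hbdd x hx).1) hf, ?_⟩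
  calc ∫ x in s, f x ∂μ ≤ ∫ _ in s, b ∂μ :=
        setIntegral_mono_on hf (integrableOn_const hμs) hs fun x hx => (hbdd x hx).2
    _ = μ.real s * b := setIntegral_const b

end SetIntegral

/-- **Centroid-based bounds for the doubly fuzzy posterior.**
If the SAM prior approximator `H` and likelihood approximator `G` take values between
their (positive) minimal and maximal then-part centroids, then the doubly fuzzy
posterior `F(θ|x) = H(θ)G(x|θ)/∫_D H G` is bounded below by
`c_{gh,min}/(m(D)c_{gh,max})` and above by `c_{gh,max}/(m(D)c_{gh,min})`. -/
theorem centroid_bounds_doubly_fuzzy_posterior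
    (D : Set ℝ) (hDm : MeasurableSet D)
    (hD_pos : 0 < volume D) (hD_fin : volume D < ⊤)
    {X : Type*} (H : ℝ → ℝ) (G : X → ℝ → ℝ)
    (hH_meas : Measurable H) (hG_meas : ∀ x, Measurable (G x))
    (chmin chmax cgmin cgmax : ℝ)
    (hchmin : 0 < chmin) (hcgmin : 0 < cgmin)
    (hH_bdd : ∀ θ ∈ D, chmin ≤ H θ ∧ H θ ≤ chmax)
    (hG_bdd : ∀ x, ∀ θ ∈ D, cgmin ≤ G x θ ∧ G x θ ≤ cgmax) :
    ∀ x, ∀ θ ∈ D,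
      (cgmin * chmin) / ((volume D).toReal * (cgmax * chmax)) ≤
          H θ * G x θ / (∫ u in D, H u * G x u) ∧
        H θ * G x θ / (∫ u in D, H u * G x u) ≤
          (cgmax * chmax) / ((volume D).toReal * (cgmin * chmin)) := by
  intro x θ hθ
  have hprod : ∀ u ∈ D, H u * G x u ∈ Icc (chmin * cgmin) (chmax * cgmax) := fun u hu =>
    mul_mem_Icc_of_mem_Icc hchmin.le hcgmin.le (hH_bdd u hu) (hG_bdd x u hu)
  have hint : IntegrableOn (fun u => H u * G x u) D :=
    integrableOn_of_mem_Icc hDm hD_fin.ne (hH_meas.mul (hG_meas x)).aestronglyMeasurable hprod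
  have hm : 0 < volume.real D := ENNReal.toReal_pos hD_pos.ne' hD_fin.ne
  rw [mul_comm cgmin, mul_comm cgmax]
  exact div_mem_Icc_of_mem_Icc (mul_pos hchmin hcgmin) hm (hprod θ hθ)
    (setIntegral_mem_Icc_of_mem_Icc hDm hD_fin.ne hint hprod)
end

section
/- Let 𝒟 ⊂ ℝ² (the set of all parameter pairs (θ, τ)) and 𝒳 ⊂ ℝ^e be compact, with 𝒟 of finite Lebesgue measure m(𝒟). Let h(θ|τ), π(τ), and g(x|θ) be bounded continuous nonnegative functions such that p(θ, τ) = h(θ|τ) π(τ) is a probability density on 𝒟 (∫_𝒟 p = 1), and assume the Bayes factor q(x) = ∬_𝒟 p(θ, τ) g(x|θ) dτ dθ is strictly positive for every x ∈ 𝒳; set f(θ, τ|x) = p(θ,τ) g(x|θ) / q(x). Then for every ε > 0 there exist δ_p > 0 and δ_g > 0 such that: for all measurable P : 𝒟 → ℝ and G : 𝒳 × 𝒟 → ℝ with sup_{θ,τ} |P(θ,τ) − p(θ,τ)| < δ_p and sup_{x,θ} |G(x|θ) − g(x|θ)| < δ_g, the quantity Q(x) = ∬_𝒟 P(θ,τ)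 G(x|θ) dτ dθ is nonzero for all x and the approximator F(θ, τ|x) = P(θ,τ) G(x|θ) / Q(x) satisfies |F(θ,τ|x) − f(θ,τ|x)| < ε for all x ∈ 𝒳 and all (θ, τ) ∈ 𝒟. (Extended Bayesian Approximation Theorem.) -/
open MeasureTheory Topology
open scoped ENNReal

/-! The Bayes factor `q x = ∫_D p g(x, ·)` is continuous on the compact set `X` (uniform
continuity of `g` on `X × D`), hence bounded below by some `m > 0`. If `P` and `G` are `δ`-close
to `p` and `g`, then `P G` is `O(δ)`-close to `p g` on `X × D`, so `Q` is `O(δ)`-close to `q`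
and stays above `m / 2`. The elementary estimate
`|A / B - a / b| ≤ 2 |A - a| / m + 2 |a| |B - b| / m²` then makes `F` uniformly `O(δ)`-close
to `f`. -/

namespace MeasureTheory

variable {α E : Type*} [MeasurableSpace α] [NormedAddCommGroup E]
  {μ : Measure α} {s : Set α} {f g : α → E} {C : ℝ}

theorem IntegrableOn.of_norm_sub_le (hg : IntegrableOn g s μ)
    (hf : AEStronglyMeasurable f (μ.restrict s)) (hs : μ s < ∞) (hsm : MeasurableSet s)
    (hfg : ∀ x ∈ s, ‖f x - g x‖ ≤ C) : IntegrableOn f s μ := by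
  have hdiff : IntegrableOn (f - g) s μ :=
    .of_bound hs (hf.sub hg.aestronglyMeasurable) C (ae_restrict_of_forall_mem hsm hfg)
  simpa using hdiff.add hg

theorem norm_setIntegral_sub_le_of_norm_sub_le [NormedSpace ℝ E] (hs : μ s < ∞)
    (hf : IntegrableOn f s μ) (hg : IntegrableOn g s μ) (hfg : ∀ x ∈ s, ‖f x - g x‖ ≤ C) :
    ‖∫ x in s, f x ∂μ - ∫ x in s, g x ∂μ‖ ≤ C * μ.real s := by
  rw [← integral_sub hf hg]
  exact norm_setIntegral_le_of_norm_le_const hs hfg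

theorem continuousOn_setIntegral_of_continuousOn_prod [NormedSpace ℝ E] {X Y : Type*}
    [TopologicalSpace X] [TopologicalSpace Y] [T2Space Y] [MeasurableSpace Y]
    [OpensMeasurableSpace Y] {μ : Measure Y} [IsFiniteMeasureOnCompacts μ]
    {f : X → Y → E} {s : Set X} {k : Set Y} (hk : IsCompact k)
    (hf : ContinuousOn f.uncurry (s ×ˢ k)) :
    ContinuousOn (fun x ↦ ∫ y in k, f x y ∂μ) s := by
  have hint : ∀ x ∈ s, IntegrableOn (f x) k μ := fun x hx ↦
    (hf.comp (Continuous.prodMk_right x).continuousOn fun y hy ↦ ⟨hx, hy⟩).integrableOn_compact hk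
  intro x hx
  refine Metric.continuousWithinAt_iff'.2 fun ε hε ↦ ?_
  obtain ⟨δ, hδ, hδε⟩ := exists_pos_mul_lt hε (μ.real k)
  obtain ⟨v, hv, hvδ⟩ := hk.mem_uniformity_of_prod hf hx (Metric.dist_mem_uniformity hδ)
  filter_upwards [hv, self_mem_nhdsWithin] with x' hx'v hx's
  rw [dist_eq_norm]
  calc _ ≤ δ * μ.real k :=
        norm_setIntegral_sub_le_of_norm_sub_le hk.measure_lt_top (hint x' hx's) (hint x hx)
          fun y hy ↦ (dist_eq_norm (f x' y) (f x y) ▸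
            show dist (f x' y) (f x y) < δ from hvδ x' hx'v y hy).le
    _ < ε := by rwa [mul_comm]

end MeasureTheory

theorem abs_mul_sub_mul_le {a b a' b' A B δ : ℝ} (ha : |a| ≤ A) (hb : |b| ≤ B)
    (ha' : |a' - a| ≤ δ) (hb' : |b' - b| ≤ δ) :
    |a' * b' - a * b| ≤ δ * (A + B + δ) := by
  have hA : 0 ≤ A := (abs_nonneg _).trans ha
  have hδ : 0 ≤ δ := (abs_nonneg _).trans ha'
  calc |a' * b' - a * b| = |(a' - a) * (b' - b) + (a' - a) * b + a * (b' - b)| := by ring_nf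
    _ ≤ |a' - a| * |b' - b| + |a' - a| * |b| + |a| * |b' - b| := by
        rw [← abs_mul, ← abs_mul, ← abs_mul]; exact abs_add_three _ _ _
    _ ≤ δ * δ + δ * B + A * δ := by gcongr
    _ = δ * (A + B + δ) := by ring

theorem abs_div_sub_div_le {a b a' b' m : ℝ} (hm : 0 < m) (hb : m ≤ b) (hb' : m / 2 ≤ b') :
    |a' / b' - a / b| ≤ 2 * |a' - a| / m + 2 * |a| * |b' - b| / m ^ 2 := by
  have hb0 : 0 < b := hm.trans_le hb
  have hb'0 : 0 < b' := (half_pos hm).trans_le hb'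
  calc |a' / b' - a / b| = |(a' - a) / b' + a * (b - b') / (b' * b)| := by
        congr 1; field_simp; ring
    _ ≤ |(a' - a) / b'| + |a * (b - b') / (b' * b)| := abs_add_le _ _
    _ = |a' - a| / b' + |a| * |b' - b| / (b' * b) := by
        rw [abs_div, abs_div, abs_mul, abs_of_pos hb'0, abs_of_pos (mul_pos hb'0 hb0),
          abs_sub_comm b b']
    _ ≤ |a' - a| / (m / 2) + |a| * |b' - b| / (m / 2 * m) := by gcongr
    _ = 2 * |a' - a| / m + 2 * |a| * |b' - b| / m ^ 2 := by field_simp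

theorem extended_bayesian_approximation_theorem_general
    (e : ℕ) (D : Set (ℝ × ℝ)) (X : Set (Fin e → ℝ))
    (hDc : IsCompact D) (hXc : IsCompact X)
    (h : ℝ × ℝ → ℝ) (pr : ℝ → ℝ) (g : (Fin e → ℝ) → ℝ → ℝ)
    (p : ℝ × ℝ → ℝ) (hp : ∀ θτ, p θτ = h θτ * pr θτ.2)
    (hh_cont : ContinuousOn h D)
    (hpr_cont : ContinuousOn (fun θτ : ℝ × ℝ => pr θτ.2) D)
    (hg_cont : ContinuousOn
      (fun q : (Fin e → ℝ) × (ℝ × ℝ) => g q.1 q.2.1) (X ×ˢ D))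
    (hq_pos : ∀ x ∈ X, 0 < ∫ θτ in D, p θτ * g x θτ.1) :
    ∀ ε > 0, ∃ δp > 0, ∃ δg > 0,
      ∀ (P : ℝ × ℝ → ℝ) (G : (Fin e → ℝ) → ℝ → ℝ),
        Measurable P →
        Measurable (fun q : (Fin e → ℝ) × ℝ => G q.1 q.2) →
        (∀ θτ ∈ D, |P θτ - p θτ| < δp) →
        (∀ x ∈ X, ∀ θτ ∈ D, |G x θτ.1 - g x θτ.1| < δg) →
        (∀ x ∈ X, (∫ θτ in D, P θτ * G x θτ.1) ≠ 0) ∧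
        (∀ x ∈ X, ∀ θτ ∈ D,
          |P θτ * G x θτ.1 / (∫ u in D, P u * G x u.1) -
            p θτ * g x θτ.1 / (∫ u in D, p u * g x u.1)| < ε) := by
  intro ε hε
  have hp_cont : ContinuousOn p D := (hh_cont.mul hpr_cont).congr fun θτ _ ↦ hp θτ
  have hpg_cont : ContinuousOn (fun x θτ ↦ p θτ * g x θτ.1).uncurry (X ×ˢ D) :=
    (hp_cont.comp continuousOn_snd fun _ hz ↦ hz.2).mul hg_cont
  obtain ⟨Cp, hCp⟩ := hDc.exists_bound_of_continuousOn hp_cont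
  obtain ⟨Cg, hCg⟩ := (hXc.prod hDc).exists_bound_of_continuousOn hg_cont
  obtain ⟨m, hm, hqm⟩ := hXc.exists_forall_le'
    (continuousOn_setIntegral_of_continuousOn_prod hDc hpg_cont) hq_pos
  set M := volume.real D
  obtain ⟨δ, ⟨hδM, hδε⟩, hδ⟩ : ∃ δ, (δ * (Cp + Cg + δ) * M < m / 2 ∧
      2 * (δ * (Cp + Cg + δ)) / m + 2 * (Cp * Cg) * (δ * (Cp + Cg + δ) * M) / m ^ 2 < ε) ∧
      0 < δ := by
    -- both error terms are continuous in `δ` and vanish at `δ = 0`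
    refine ((((Continuous.tendsto ?_ 0).eventually (gt_mem_nhds ?_)).and
      ((Continuous.tendsto ?_ 0).eventually (gt_mem_nhds ?_))).filter_mono
      nhdsWithin_le_nhds |>.and self_mem_nhdsWithin).exists (f := 𝓝[>] 0)
    all_goals first | fun_prop | simp [hm, hε]
  refine ⟨δ, hδ, δ, hδ, fun P G hP hG hPp hGg ↦ ?_⟩
  have hPG : ∀ x ∈ X, ∀ θτ ∈ D,
      |P θτ * G x θτ.1 - p θτ * g x θτ.1| ≤ δ * (Cp + Cg + δ) := fun x hx θτ hθτ ↦
    abs_mul_sub_mul_le (hCp θτ hθτ) (hCg (x, θτ) ⟨hx, hθτ⟩) (hPp θτ hθτ).le (hGg x hx θτ hθτ).le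
  have hQq : ∀ x ∈ X, |(∫ u in D, P u * G x u.1) - ∫ u in D, p u * g x u.1| ≤
      δ * (Cp + Cg + δ) * M := by
    intro x hx
    have hpg : IntegrableOn (fun u ↦ p u * g x u.1) D :=
      (hpg_cont.comp (Continuous.prodMk_right x).continuousOn
        fun _ hu ↦ ⟨hx, hu⟩).integrableOn_compact hDc
    have hPGm : AEStronglyMeasurable (fun u ↦ P u * G x u.1) (volume.restrict D) :=
      (hP.mul (hG.comp (measurable_const.prodMk measurable_fst))).aestronglyMeasurable
    exact norm_setIntegral_sub_le_of_norm_sub_le hDc.measure_lt_top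
      (hpg.of_norm_sub_le hPGm hDc.measure_lt_top hDc.measurableSet (hPG x hx)) hpg (hPG x hx)
  have hQ : ∀ x ∈ X, m / 2 ≤ ∫ u in D, P u * G x u.1 := fun x hx ↦ by
    linarith [(abs_le.1 (hQq x hx)).1, hqm x hx]
  refine ⟨fun x hx ↦ ((half_pos hm).trans_le (hQ x hx)).ne', fun x hx θτ hθτ ↦ ?_⟩
  have hpg_le : |p θτ * g x θτ.1| ≤ Cp * Cg := by
    rw [abs_mul]
    exact mul_le_mul (hCp θτ hθτ) (hCg (x, θτ) ⟨hx, hθτ⟩) (abs_nonneg _)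
      ((abs_nonneg _).trans (hCp θτ hθτ))
  calc _ ≤ 2 * |P θτ * G x θτ.1 - p θτ * g x θτ.1| / m + 2 * |p θτ * g x θτ.1| *
          |(∫ u in D, P u * G x u.1) - ∫ u in D, p u * g x u.1| / m ^ 2 :=
        abs_div_sub_div_le hm (hqm x hx) (hQ x hx)
    _ ≤ 2 * (δ * (Cp + Cg + δ)) / m + 2 * (Cp * Cg) * (δ * (Cp + Cg + δ) * M) / m ^ 2 := by
        have hCpg : 0 ≤ Cp * Cg := (abs_nonneg _).trans hpg_le
        gcongr
        exacts [hPG x hx θτ hθτ, hQq x hx]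
    _ < ε := hδε

/-- **Extended Bayesian Approximation Theorem.**
On the compact set `D ⊂ ℝ²` of parameter pairs `(θ, τ)` and the compact data set
`X`, uniform approximators `P` of the joint prior `p(θ,τ) = h(θ|τ)π(τ)` and `G` of
the likelihood `g(x|θ)` yield a uniform approximator
`F(θ,τ|x) = P(θ,τ)G(x|θ)/∬_D P G` of the hierarchical posterior
`f(θ,τ|x) = p(θ,τ)g(x|θ)/∬_D p g`. -/
theorem extended_bayesian_approximation_theorem
    (e : ℕ) (D : Set (ℝ × ℝ)) (X : Set (Fin e → ℝ))
    (hDc : IsCompact D) (hXc : IsCompact X) (hDm : MeasurableSet D)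
    (h : ℝ × ℝ → ℝ) (pr : ℝ → ℝ) (g : (Fin e → ℝ) → ℝ → ℝ)
    (p : ℝ × ℝ → ℝ) (hp : ∀ θτ, p θτ = h θτ * pr θτ.2)
    (hh_cont : ContinuousOn h D)
    (hpr_cont : ContinuousOn (fun θτ : ℝ × ℝ => pr θτ.2) D)
    (hg_cont : ContinuousOn
      (fun q : (Fin e → ℝ) × (ℝ × ℝ) => g q.1 q.2.1) (X ×ˢ D))
    (hh_bdd : ∃ C, ∀ θτ ∈ D, |h θτ| ≤ C)
    (hpr_bdd : ∃ C, ∀ θτ ∈ D, |pr θτ.2| ≤ C)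
    (hg_bdd : ∃ C, ∀ x ∈ X, ∀ θτ ∈ D, |g x θτ.1| ≤ C)
    (hh_nonneg : ∀ θτ ∈ D, 0 ≤ h θτ)
    (hpr_nonneg : ∀ θτ ∈ D, 0 ≤ pr θτ.2)
    (hg_nonneg : ∀ x ∈ X, ∀ θτ ∈ D, 0 ≤ g x θτ.1)
    (hp_prob : (∫ θτ in D, p θτ) = 1)
    (hq_pos : ∀ x ∈ X, 0 < ∫ θτ in D, p θτ * g x θτ.1) :
    ∀ ε > 0, ∃ δp > 0, ∃ δg > 0,
      ∀ (P : ℝ × ℝ → ℝ) (G : (Fin e → ℝ) → ℝ → ℝ),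
        Measurable P →
        Measurable (fun q : (Fin e → ℝ) × ℝ => G q.1 q.2) →
        (∀ θτ ∈ D, |P θτ - p θτ| < δp) →
        (∀ x ∈ X, ∀ θτ ∈ D, |G x θτ.1 - g x θτ.1| < δg) →
        (∀ x ∈ X, (∫ θτ in D, P θτ * G x θτ.1) ≠ 0) ∧
        (∀ x ∈ X, ∀ θτ ∈ D,
          |P θτ * G x θτ.1 / (∫ u in D, P u * G x u.1) -
            p θτ * g x θτ.1 / (∫ u in D, p u * g x u.1)| < ε) :=
  extended_bayesian_approximation_theorem_general e D X hDc hXc h pr g p hp hh_cont hpr_cont hg_cont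
    hq_pos
end
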